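/- Suppose U is twice continuously differentiable. Then the attracting numerical step Φ⁻_ε is differentiable, and its Jacobian J = D Φ⁻_ε(z) at every z ∈ ℝᵈ × ℝᵈ satisfies the conformal-symplectic identity Jᵀ Ω⁻¹ J = e^{−γ ε} Ω⁻¹, where Ω⁻¹ is the 2d×2d block matrix [[0, −I_d],[I_d, 0]]. -/

import Mathlib

/-!
Write `ω(u, v) = ⟪u.2, v.1⟫ - ⟪u.1, v.2⟫`, whose Gram matrix in the standard basis is `Ω⁻¹`.
The leapfrog step is kick ∘ drift ∘ kick, with kick `(q, p) ↦ (q, p - (ε/2) ∇U(q))` and drift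
`(q, p) ↦ (q + ε Σ⁻¹ p, p)`. The derivatives of both preserve `ω`, because the Hessian of `U` and
`Σ⁻¹` are symmetric, while `ξ_{-ε/2}` is linear and scales `ω` by `e^{-γε/2}`. The chain rule then
gives `ω(J u, J v) = e^{-γε} ω(u, v)`, which is the matrix identity.
-/

open Matrix

noncomputable section

/-- Action of a matrix on a vector in Euclidean space. -/
def mvec {d : ℕ} (A : Matrix (Fin d) (Fin d) ℝ) (p : EuclideanSpace ℝ (Fin d)) :
    EuclideanSpace ℝ (Fin d) :=
  WithLp.toLp 2 (A.mulVec p)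

/-- The leapfrog step `P_ε` with potential `U` and inverse mass matrix `Sinv = Σ⁻¹`. -/
def leapfrog {d : ℕ} (U : EuclideanSpace ℝ (Fin d) → ℝ) (Sinv : Matrix (Fin d) (Fin d) ℝ)
    (ε : ℝ) (z : EuclideanSpace ℝ (Fin d) × EuclideanSpace ℝ (Fin d)) :
    EuclideanSpace ℝ (Fin d) × EuclideanSpace ℝ (Fin d) :=
  let phalf := z.2 - (ε / 2) • gradient U z.1
  let q' := z.1 + ε • mvec Sinv phalf
  (q', phalf - (ε / 2) • gradient U q')

/-- The momentum-rescaling map `ξ_t(q, p) = (q, e^{γ t} p)`. -/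
def xi {d : ℕ} (γ t : ℝ) (z : EuclideanSpace ℝ (Fin d) × EuclideanSpace ℝ (Fin d)) :
    EuclideanSpace ℝ (Fin d) × EuclideanSpace ℝ (Fin d) :=
  (z.1, Real.exp (γ * t) • z.2)

/-- The repelling numerical step `Φ⁺_ε = ξ_{ε/2} ∘ P_ε ∘ ξ_{ε/2}`. -/
def stepPlus {d : ℕ} (U : EuclideanSpace ℝ (Fin d) → ℝ) (Sinv : Matrix (Fin d) (Fin d) ℝ)
    (γ ε : ℝ) :
    EuclideanSpace ℝ (Fin d) × EuclideanSpace ℝ (Fin d) →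
      EuclideanSpace ℝ (Fin d) × EuclideanSpace ℝ (Fin d) :=
  xi γ (ε / 2) ∘ leapfrog U Sinv ε ∘ xi γ (ε / 2)

/-- The attracting numerical step `Φ⁻_ε = ξ_{−ε/2} ∘ P_ε ∘ ξ_{−ε/2}`. -/
def stepMinus {d : ℕ} (U : EuclideanSpace ℝ (Fin d) → ℝ) (Sinv : Matrix (Fin d) (Fin d) ℝ)
    (γ ε : ℝ) :
    EuclideanSpace ℝ (Fin d) × EuclideanSpace ℝ (Fin d) →
      EuclideanSpace ℝ (Fin d) × EuclideanSpace ℝ (Fin d) :=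
  xi γ (-(ε / 2)) ∘ leapfrog U Sinv ε ∘ xi γ (-(ε / 2))


/-- The product basis of the standard bases on `ℝᵈ × ℝᵈ`, indexed by `Fin d ⊕ Fin d`. -/
def phaseBasis (d : ℕ) :
    Module.Basis (Fin d ⊕ Fin d) ℝ (EuclideanSpace ℝ (Fin d) × EuclideanSpace ℝ (Fin d)) :=
  (PiLp.basisFun 2 ℝ (Fin d)).prod (PiLp.basisFun 2 ℝ (Fin d))

/-- The Jacobian matrix of a map on phase space at a point, in the standard basis. -/
def Jmat {d : ℕ}
    (Φ : EuclideanSpace ℝ (Fin d) × EuclideanSpace ℝ (Fin d) →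
      EuclideanSpace ℝ (Fin d) × EuclideanSpace ℝ (Fin d))
    (z : EuclideanSpace ℝ (Fin d) × EuclideanSpace ℝ (Fin d)) :
    Matrix (Fin d ⊕ Fin d) (Fin d ⊕ Fin d) ℝ :=
  LinearMap.toMatrix (phaseBasis d) (phaseBasis d) (fderiv ℝ Φ z).toLinearMap

/-- The block matrix `Ω⁻¹ = [[0, −I_d], [I_d, 0]]`. -/
def Ωinv (d : ℕ) : Matrix (Fin d ⊕ Fin d) (Fin d ⊕ Fin d) ℝ :=
  Matrix.fromBlocks 0 (-1) 1 0

open InnerProductSpace ContinuousLinearMap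

section PhaseSpace

variable {E : Type*} [NormedAddCommGroup E] [InnerProductSpace ℝ E]

def symplecticForm : E × E →ₗ[ℝ] E × E →ₗ[ℝ] ℝ :=
  (innerₗ E).compl₁₂ (LinearMap.snd ℝ E E) (LinearMap.fst ℝ E E) -
    (innerₗ E).compl₁₂ (LinearMap.fst ℝ E E) (LinearMap.snd ℝ E E)

@[simp]
lemma symplecticForm_apply (u v : E × E) :
    symplecticForm u v = inner ℝ u.2 v.1 - inner ℝ u.1 v.2 :=
  rfl

def IsConformallySymplectic (c : ℝ) (Φ : E × E → E × E) : Prop :=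
  ∀ z, ∃ L : E × E →L[ℝ] E × E, HasFDerivAt Φ L z ∧
    ∀ u v, symplecticForm (L u) (L v) = c * symplecticForm u v

namespace IsConformallySymplectic

variable {a b : ℝ} {Φ Ψ : E × E → E × E}

lemma differentiable (hΦ : IsConformallySymplectic a Φ) : Differentiable ℝ Φ := fun z ↦
  let ⟨_, hL, _⟩ := hΦ z
  hL.differentiableAt

lemma comp (hΦ : IsConformallySymplectic a Φ) (hΨ : IsConformallySymplectic b Ψ) :
    IsConformallySymplectic (a * b) (Φ ∘ Ψ) := by
  intro z
  obtain ⟨M, hM, hMω⟩ := hΨ z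
  obtain ⟨L, hL, hLω⟩ := hΦ (Ψ z)
  refine ⟨L ∘L M, hL.comp z hM, fun u v ↦ ?_⟩
  rw [coe_comp, Function.comp_apply, Function.comp_apply, hLω, hMω, mul_assoc]

end IsConformallySymplectic

lemma ContinuousLinearMap.isConformallySymplectic {c : ℝ} (L : E × E →L[ℝ] E × E)
    (hL : ∀ u v, symplecticForm (L u) (L v) = c * symplecticForm u v) :
    IsConformallySymplectic c L :=
  fun _ ↦ ⟨L, L.hasFDerivAt, hL⟩

lemma isConformallySymplectic_smul_snd (r : ℝ) :
    IsConformallySymplectic r (fun z : E × E ↦ (z.1, r • z.2)) :=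
  ((ContinuousLinearMap.id ℝ E).prodMap (r • ContinuousLinearMap.id ℝ E)).isConformallySymplectic
    fun u v ↦ by
      simp only [coe_prodMap', coe_id', FunLike.coe_smul, symplecticForm_apply, Prod.map_fst,
        Prod.map_snd, Pi.smul_apply, id_eq, real_inner_smul_left, real_inner_smul_right]
      ring

def drift (M : E →L[ℝ] E) (h : ℝ) (z : E × E) : E × E :=
  (z.1 + h • M z.2, z.2)

lemma isConformallySymplectic_drift {M : E →L[ℝ] E} (hM : (M : E →ₗ[ℝ] E).IsSymmetric) (h : ℝ) :
    IsConformallySymplectic 1 (drift M h) :=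
  ((fst ℝ E E + h • M ∘L snd ℝ E E).prod (snd ℝ E E)).isConformallySymplectic fun u v ↦ by
    have hMuv : inner ℝ (M u.2) v.2 = inner ℝ u.2 (M v.2) := hM u.2 v.2
    simp [inner_add_left, inner_add_right, real_inner_smul_left, real_inner_smul_right, hMuv]

variable [CompleteSpace E]

def kick (U : E → ℝ) (h : ℝ) (z : E × E) : E × E :=
  (z.1, z.2 - h • gradient U z.1)

lemma exists_isSymmetric_hasFDerivAt_gradient {U : E → ℝ} (hU : ContDiff ℝ 2 U) (x : E) :
    ∃ H : E →L[ℝ] E, (H : E →ₗ[ℝ] E).IsSymmetric ∧ HasFDerivAt (gradient U) H x := by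
  let riesz : StrongDual ℝ E ≃L[ℝ] E := (toDual ℝ E).symm.toContinuousLinearEquiv
  refine ⟨riesz ∘L fderiv ℝ (fderiv ℝ U) x, fun u v ↦ ?_, ?_⟩
  · have hsymm : IsSymmSndFDerivAt ℝ U x := hU.contDiffAt.isSymmSndFDerivAt (by norm_num)
    simp only [riesz, coe_comp, coe_coe, Function.comp_apply, ContinuousLinearEquiv.coe_coe,
      LinearIsometryEquiv.coe_toContinuousLinearEquiv]
    rw [toDual_symm_apply, real_inner_comm, toDual_symm_apply]
    exact hsymm u v
  · have : Differentiable ℝ (fderiv ℝ U) :=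
      (hU.fderiv_right (m := 1) (by norm_num)).differentiable (by norm_num)
    exact riesz.hasFDerivAt.comp x (this x).hasFDerivAt

lemma isConformallySymplectic_kick {U : E → ℝ} (hU : ContDiff ℝ 2 U) (h : ℝ) :
    IsConformallySymplectic 1 (kick U h) := by
  intro z
  obtain ⟨H, hHsymm, hH⟩ := exists_isSymmetric_hasFDerivAt_gradient hU z.1
  refine ⟨(fst ℝ E E).prod (snd ℝ E E - h • H ∘L fst ℝ E E),
    hasFDerivAt_fst.prodMk (hasFDerivAt_snd.sub ((hH.comp z hasFDerivAt_fst).const_smul h)),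
    fun u v ↦ ?_⟩
  have hHuv : inner ℝ (H u.1) v.1 = inner ℝ u.1 (H v.1) := hHsymm u.1 v.1
  simp [inner_sub_left, inner_sub_right, real_inner_smul_left, real_inner_smul_right, hHuv]

end PhaseSpace

section EuclideanPhaseSpace

variable {d : ℕ}

lemma isConformallySymplectic_leapfrog {U : EuclideanSpace ℝ (Fin d) → ℝ} (hU : ContDiff ℝ 2 U)
    {Sinv : Matrix (Fin d) (Fin d) ℝ} (hSinv : Sinv.IsSymm) (ε : ℝ) :
    IsConformallySymplectic 1 (leapfrog U Sinv ε) := by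
  have hdrift := isConformallySymplectic_drift (M := toEuclideanCLM (𝕜 := ℝ) Sinv)
    (isSymmetric_toEuclideanLin_iff.mpr (isHermitian_iff_isSymm.mpr hSinv)) ε
  show IsConformallySymplectic 1
    (kick U (ε / 2) ∘ drift (toEuclideanCLM (𝕜 := ℝ) Sinv) ε ∘ kick U (ε / 2))
  simpa only [one_mul] using (isConformallySymplectic_kick hU (ε / 2)).comp <|
    hdrift.comp (isConformallySymplectic_kick hU (ε / 2))

lemma isConformallySymplectic_stepMinus {U : EuclideanSpace ℝ (Fin d) → ℝ} (hU : ContDiff ℝ 2 U)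
    {Sinv : Matrix (Fin d) (Fin d) ℝ} (hSinv : Sinv.IsSymm) (γ ε : ℝ) :
    IsConformallySymplectic (Real.exp (-(γ * ε))) (stepMinus U Sinv γ ε) := by
  have hξ : IsConformallySymplectic (Real.exp (γ * -(ε / 2))) (xi (d := d) γ (-(ε / 2))) :=
    isConformallySymplectic_smul_snd _
  show IsConformallySymplectic _ (xi γ (-(ε / 2)) ∘ leapfrog U Sinv ε ∘ xi γ (-(ε / 2)))
  convert hξ.comp ((isConformallySymplectic_leapfrog hU hSinv ε).comp hξ) using 1
  rw [one_mul, ← Real.exp_add]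
  ring_nf

lemma toMatrix₂_symplecticForm :
    LinearMap.toMatrix₂ (phaseBasis d) (phaseBasis d) symplecticForm = Ωinv d := by
  ext i j
  rw [LinearMap.toMatrix₂_apply]
  rcases i with i | i <;> rcases j with j | j <;>
    simp [phaseBasis, Ωinv, EuclideanSpace.inner_single_left, Matrix.one_apply, eq_comm]

lemma toMatrix_transpose_mul_Ωinv_mul_toMatrix {c : ℝ}
    (L : EuclideanSpace ℝ (Fin d) × EuclideanSpace ℝ (Fin d) →ₗ[ℝ]
      EuclideanSpace ℝ (Fin d) × EuclideanSpace ℝ (Fin d))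
    (hL : ∀ u v, symplecticForm (L u) (L v) = c * symplecticForm u v) :
    (LinearMap.toMatrix (phaseBasis d) (phaseBasis d) L)ᵀ * Ωinv d *
        LinearMap.toMatrix (phaseBasis d) (phaseBasis d) L = c • Ωinv d := by
  rw [← toMatrix₂_symplecticForm, ← LinearMap.toMatrix₂_compl₁₂,
    show symplecticForm.compl₁₂ L L = c • symplecticForm from LinearMap.ext₂ hL, map_smul]

end EuclideanPhaseSpace

theorem stepMinus_conformally_symplectic_general
    (d : ℕ) (ε : ℝ) (γ : ℝ)
    (U : EuclideanSpace ℝ (Fin d) → ℝ) (hU : ContDiff ℝ 2 U)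
    (S : Matrix (Fin d) (Fin d) ℝ) (hSsymm : S.IsSymm) :
    Differentiable ℝ (stepMinus U S⁻¹ γ ε) ∧
      ∀ z : EuclideanSpace ℝ (Fin d) × EuclideanSpace ℝ (Fin d),
        (Jmat (stepMinus U S⁻¹ γ ε) z)ᵀ * Ωinv d * Jmat (stepMinus U S⁻¹ γ ε) z =
          Real.exp (-(γ * ε)) • Ωinv d := by
  have hΦ := isConformallySymplectic_stepMinus hU hSsymm.inv γ ε
  refine ⟨hΦ.differentiable, fun z ↦ ?_⟩
  obtain ⟨L, hL, hLω⟩ := hΦ z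
  rw [Jmat, hL.fderiv]
  exact toMatrix_transpose_mul_Ωinv_mul_toMatrix _ hLω

/-- For `U` twice continuously differentiable, the attracting numerical
step `Φ⁻_ε` is differentiable and its Jacobian `J = DΦ⁻_ε(z)` satisfies the
conformal-symplectic identity `Jᵀ Ω⁻¹ J = e^{−γ ε} Ω⁻¹` at every `z`. -/
theorem stepMinus_conformally_symplectic
    (d : ℕ) (hd : 1 ≤ d) (ε : ℝ) (hε : 0 < ε) (γ : ℝ) (hγ : 0 < γ)
    (U : EuclideanSpace ℝ (Fin d) → ℝ) (hU : ContDiff ℝ 2 U)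
    (S : Matrix (Fin d) (Fin d) ℝ) (hSsymm : S.IsSymm) (hSpd : S.PosDef) :
    Differentiable ℝ (stepMinus U S⁻¹ γ ε) ∧
      ∀ z : EuclideanSpace ℝ (Fin d) × EuclideanSpace ℝ (Fin d),
        (Jmat (stepMinus U S⁻¹ γ ε) z)ᵀ * Ωinv d * Jmat (stepMinus U S⁻¹ γ ε) z =
          Real.exp (-(γ * ε)) • Ωinv d :=
  stepMinus_conformally_symplectic_general d ε γ U hU S hSsymm
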